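/- Under the same hypotheses (coefficient errors bounded by δ in ℓ_p, 1 ≤ p ≤ ∞, γ ≥ 1), the truncated differentiation operator satisfies the uniform-norm stability bound ‖D^{(r,0)}_{n,γ} f - D^{(r,0)}_{n,γ} f^δ‖_C ≤ c·δ·n^{2r - 1/p + 1}. -/

import Mathlib

open Real Set Finset MeasureTheory ENNReal

noncomputable def chebT (k : ℕ) : ℝ → ℝ := fun t =>
  (if k = 0 then 1 / Real.sqrt π else Real.sqrt 2 / Real.sqrt π) *
    (Polynomial.Chebyshev.T ℝ (k : ℤ)).eval t

noncomputable def chebWeight2 (t τ : ℝ) : ℝ :=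
  (1 - t ^ 2) ^ (-(1 : ℝ) / 2) * (1 - τ ^ 2) ^ (-(1 : ℝ) / 2)

noncomputable def chebCoeff (f : ℝ → ℝ → ℝ) (k j : ℕ) : ℝ :=
  ∫ t in (-1 : ℝ)..1, ∫ τ in (-1 : ℝ)..1, chebWeight2 t τ * f t τ * chebT k t * chebT j τ

/-- Hyperbolic-cross truncated differentiation operator `D^{(r,0)}_{n,γ}`. -/
noncomputable def truncDiff (r n : ℕ) (γ : ℝ) (f : ℝ → ℝ → ℝ) (t τ : ℝ) : ℝ :=
  ∑ k ∈ Finset.Icc r n, ∑ j ∈ Finset.range (⌊((n : ℝ) / (k : ℝ)) ^ (1 / γ)⌋₊ + 1),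
    chebCoeff f k j * iteratedDeriv r (chebT k) t * chebT j τ

section Aux

open Polynomial Polynomial.Chebyshev

lemma U_add_two_eq (n : ℤ) : U ℝ (n + 2) = U ℝ n + 2 * T ℝ (n + 2) := by
  have h1 := U_add_two ℝ n
  have h2 := U_eq_X_mul_U_add_T ℝ (n + 1)
  rw [show n + 1 + 1 = n + 2 by ring] at h2
  linear_combination (-1 : Polynomial ℝ) * h1 + 2 * h2

lemma iter_der_add (k : ℕ) (p q : ℝ[X]) :
    Polynomial.derivative^[k] (p + q) = Polynomial.derivative^[k] p + Polynomial.derivative^[k] q := by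
  induction k generalizing p q with
  | zero => simp
  | succ s ih => simp [Function.iterate_succ_apply, derivative_add, ih]

lemma iteratedDeriv_polyeval (r : ℕ) (p : Polynomial ℝ) :
    iteratedDeriv r (fun x => p.eval x) = fun x => (Polynomial.derivative^[r] p).eval x := by
  induction r generalizing p with
  | zero => simp
  | succ s ih =>
    rw [iteratedDeriv_succ', Function.iterate_succ_apply]
    rw [show deriv (fun x => p.eval x) = fun x => p.derivative.eval x from
      funext fun x => Polynomial.deriv p]
    exact ih _

lemma T_eval_abs_le (m : ℤ) {t : ℝ} (ht : t ∈ Set.Icc (-1 : ℝ) 1) :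
    |(T ℝ m).eval t| ≤ 1 := by
  have : t = Real.cos (Real.arccos t) := (Real.cos_arccos ht.1 ht.2).symm
  rw [this, T_real_cos]
  exact Real.abs_cos_le_one _

lemma UB_of_TB (r : ℕ)
    (hT : ∀ n : ℕ, ∀ t ∈ Set.Icc (-1:ℝ) 1,
      |(Polynomial.derivative^[r] (T ℝ n)).eval t| ≤ 4 ^ (r+1) * ((n:ℝ)+1) ^ (2*r)) :
    ∀ n : ℕ, ∀ t ∈ Set.Icc (-1:ℝ) 1,
      |(Polynomial.derivative^[r] (U ℝ n)).eval t| ≤ 4 ^ (r+2) * ((n:ℝ)+1) ^ (2*r+1) := by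
  intro n
  induction n using Nat.strong_induction_on with
  | _ n ih =>
  have h4 : (1:ℝ) ≤ 4 ^ (r+2) := one_le_pow₀ (by norm_num)
  match n with
  | 0 =>
    intro t ht
    have hU : (U ℝ ((0:ℕ):ℤ)) = 1 := U_zero ℝ
    rw [hU]
    rcases Nat.eq_zero_or_pos r with h | h
    · subst h; simp only [Function.iterate_zero, id, eval_one, abs_one]
      push_cast; norm_num
    · rw [iterate_derivative_one h]
      simp only [eval_zero, abs_zero]
      positivity
  | 1 =>
    intro t ht
    have hU : (U ℝ ((1:ℕ):ℤ)) = 2 * X := U_one ℝ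
    rw [hU]
    have habs : |t| ≤ 1 := abs_le.2 ⟨ht.1, ht.2⟩
    have hb : (2:ℝ) ≤ 4 ^ (r+2) * (((1:ℕ):ℝ)+1) ^ (2*r+1) := by
      have h2 : (2:ℝ) ≤ (((1:ℕ):ℝ)+1) ^ (2*r+1) := by
        push_cast
        calc (2:ℝ) = 2^1 := by norm_num
        _ ≤ 2 ^ (2*r+1) := by
            apply pow_le_pow_right₀ (by norm_num) (by omega)
        _ = ((1:ℝ)+1) ^ (2*r+1) := by norm_num
      nlinarith
    match r with
    | 0 =>
      simp only [Function.iterate_zero, id, eval_mul, eval_ofNat, eval_X]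
      calc |2 * t| = 2 * |t| := by rw [abs_mul]; norm_num
        _ ≤ 2 := by linarith
        _ ≤ _ := hb
    | 1 =>
      have hd : Polynomial.derivative ((2:ℝ[X]) * X) = 2 := by
        simp [derivative_mul]
      simp only [Function.iterate_one, hd, eval_ofNat]
      calc |(2:ℝ)| = 2 := by norm_num
        _ ≤ _ := hb
    | (s+2) =>
      have hz : (Polynomial.derivative^[s+2] ((2:ℝ[X]) * X)) = 0 := by
        apply iterate_derivative_eq_zero
        calc ((2:ℝ[X]) * X).natDegree ≤ 1 := by
              apply Polynomial.natDegree_mul_le.trans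
              simp [Polynomial.natDegree_X]
          _ < s + 2 := by omega
      rw [hz]; simp only [eval_zero, abs_zero]; positivity
  | (m+2) =>
    intro t ht
    have hcast : ((m+2:ℕ):ℤ) = (m:ℤ) + 2 := by push_cast; ring
    have hU : U ℝ ((m+2:ℕ):ℤ) = U ℝ m + Polynomial.C 2 * T ℝ ((m:ℤ)+2) := by
      rw [hcast, U_add_two_eq, (map_ofNat Polynomial.C 2 : Polynomial.C (2:ℝ) = 2)]
    have hder : (Polynomial.derivative^[r] (U ℝ ((m+2:ℕ):ℤ)))
        = Polynomial.derivative^[r] (U ℝ m)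
          + Polynomial.C 2 * Polynomial.derivative^[r] (T ℝ ((m:ℤ)+2)) := by
      rw [hU, iter_der_add, iterate_derivative_C_mul]
    rw [hder]
    have hTm := hT (m+2) t ht
    rw [show (((m+2:ℕ)):ℤ) = (m:ℤ)+2 from hcast] at hTm
    have hUm := ih m (by omega) t ht
    have key : 4 ^ (r+2) * ((m:ℝ)+1) ^ (2*r+1) + 2 * (4 ^ (r+1) * (((m+2:ℕ):ℝ)+1) ^ (2*r))
        ≤ 4 ^ (r+2) * (((m+2:ℕ):ℝ)+1) ^ (2*r+1) := by
      push_cast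
      have hp1 : ((m:ℝ)+1) ^ (2*r+1) ≤ ((m:ℝ)+3) ^ (2*r) * ((m:ℝ)+1) := by
        rw [pow_succ]
        have := pow_le_pow_left₀ (by positivity : (0:ℝ) ≤ (m:ℝ)+1)
          (by linarith : (m:ℝ)+1 ≤ (m:ℝ)+3) (2*r)
        nlinarith [pow_nonneg (by positivity : (0:ℝ) ≤ (m:ℝ)+1) (2*r)]
      have hp2 : (0:ℝ) < ((m:ℝ)+3) ^ (2*r) := by positivity
      have hfin : 4 ^ (r+2) * (((m:ℝ)+3) ^ (2*r) * ((m:ℝ)+1)) + 2 * (4 ^ (r+1) * ((m:ℝ)+3) ^ (2*r))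
          ≤ 4 ^ (r+2) * ((m:ℝ)+3) ^ (2*r+1) := by
        rw [pow_succ ((m:ℝ)+3) (2*r)]
        have h40 : (0:ℝ) < 4 ^ (r+1) := by positivity
        have h44 : (4:ℝ) ^ (r+2) = 4 * 4 ^ (r+1) := by ring
        nlinarith
      calc 4 ^ (r+2) * ((m:ℝ)+1) ^ (2*r+1) + 2 * (4 ^ (r+1) * ((m:ℝ)+2+1) ^ (2*r))
          ≤ 4 ^ (r+2) * (((m:ℝ)+3) ^ (2*r) * ((m:ℝ)+1)) + 2 * (4 ^ (r+1) * ((m:ℝ)+3) ^ (2*r)) := by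
            have h40 : (0:ℝ) < (4:ℝ) ^ (r+2) := by positivity
            have := mul_le_mul_of_nonneg_left hp1 (le_of_lt h40)
            have h23 : ((m:ℝ)+2+1) = (m:ℝ)+3 := by ring
            rw [h23]
            linarith
        _ ≤ 4 ^ (r+2) * ((m:ℝ)+3) ^ (2*r+1) := hfin
        _ = 4 ^ (r+2) * ((m:ℝ)+2+1) ^ (2*r+1) := by ring_nf
    refine le_trans ?_ key
    rw [eval_add]
    calc |(Polynomial.derivative^[r] (U ℝ (m:ℤ))).eval t
          + (Polynomial.C (2:ℝ) * Polynomial.derivative^[r] (T ℝ ((m:ℤ)+2))).eval t|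
        ≤ |(Polynomial.derivative^[r] (U ℝ (m:ℤ))).eval t|
          + |(Polynomial.C (2:ℝ) * Polynomial.derivative^[r] (T ℝ ((m:ℤ)+2))).eval t| :=
          abs_add_le _ _
      _ ≤ 4 ^ (r+2) * ((m:ℝ)+1) ^ (2*r+1) + 2 * (4 ^ (r+1) * (((m+2:ℕ):ℝ)+1) ^ (2*r)) := by
          have : |(Polynomial.C (2:ℝ) * Polynomial.derivative^[r] (T ℝ ((m:ℤ)+2))).eval t|
              = 2 * |(Polynomial.derivative^[r] (T ℝ ((m:ℤ)+2))).eval t| := by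
            rw [eval_mul, eval_C, abs_mul]; norm_num
          rw [this]
          have := hTm
          gcongr

lemma TB (r : ℕ) : ∀ n : ℕ, ∀ t ∈ Set.Icc (-1:ℝ) 1,
    |(Polynomial.derivative^[r] (T ℝ n)).eval t| ≤ 4 ^ (r+1) * ((n:ℝ)+1) ^ (2*r) := by
  induction r with
  | zero =>
    intro n t ht
    simp only [Function.iterate_zero, id, Nat.mul_zero, pow_zero, mul_one, pow_one]
    exact (T_eval_abs_le (n:ℤ) ht).trans (by norm_num)
  | succ s ihs =>
    have hUB := UB_of_TB s ihs
    intro n t ht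
    have hder : Polynomial.derivative^[s+1] (T ℝ (n:ℤ))
        = Polynomial.C (((n:ℤ)):ℝ) * Polynomial.derivative^[s] (U ℝ ((n:ℤ)-1)) := by
      rw [Function.iterate_succ_apply, T_derivative_eq_U, ← C_eq_intCast,
        iterate_derivative_C_mul]
    rw [hder, eval_mul, eval_C, abs_mul]
    match n with
    | 0 =>
      simp only [Int.cast_zero, Nat.cast_zero, abs_zero, zero_mul]
      positivity
    | (m+1) =>
      have hidx : ((m+1:ℕ):ℤ) - 1 = (m:ℤ) := by push_cast; ring
      rw [hidx]
      have hUm := hUB m t ht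
      have habs : |(((m+1:ℕ):ℤ):ℝ)| = (m:ℝ)+1 := by
        rw [abs_of_nonneg (by positivity)]; push_cast; ring
      rw [habs]
      calc ((m:ℝ)+1) * |(Polynomial.derivative^[s] (U ℝ (m:ℤ))).eval t|
          ≤ ((m:ℝ)+1) * (4 ^ (s+2) * ((m:ℝ)+1) ^ (2*s+1)) := by
            apply mul_le_mul_of_nonneg_left hUm (by positivity)
        _ = 4 ^ (s+2) * ((m:ℝ)+1) ^ (2*s+2) := by ring
        _ ≤ 4 ^ (s+1+1) * (((m+1:ℕ):ℝ)+1) ^ (2*(s+1)) := by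
            push_cast
            rw [show 2*(s+1) = 2*s+2 by ring]
            have := pow_le_pow_left₀ (by positivity : (0:ℝ) ≤ (m:ℝ)+1)
              (by linarith : (m:ℝ)+1 ≤ (m:ℝ)+1+1) (2*s+2)
            have h4 : (0:ℝ) < 4 ^ (s+2) := by positivity
            calc 4 ^ (s+2) * ((m:ℝ)+1) ^ (2*s+2) ≤ 4 ^ (s+2) * ((m:ℝ)+1+1) ^ (2*s+2) := by
                  exact mul_le_mul_of_nonneg_left this (le_of_lt h4)
              _ = 4 ^ (s+1+1) * ((m:ℝ)+1+1) ^ (2*s+2) := by norm_num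

noncomputable def chebC (k : ℕ) : ℝ :=
  if k = 0 then 1 / Real.sqrt π else Real.sqrt 2 / Real.sqrt π

lemma chebC_nonneg (k : ℕ) : 0 ≤ chebC k := by
  unfold chebC; split <;> positivity

lemma chebC_le_one (k : ℕ) : chebC k ≤ 1 := by
  have hpi : (0:ℝ) < Real.sqrt π := Real.sqrt_pos.2 Real.pi_pos
  have h1 : (1:ℝ) ≤ Real.sqrt π := by
    rw [show (1:ℝ) = Real.sqrt 1 from (Real.sqrt_one).symm]
    exact Real.sqrt_le_sqrt (by linarith [Real.pi_gt_three])
  have h2 : Real.sqrt 2 ≤ Real.sqrt π :=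
    Real.sqrt_le_sqrt (by linarith [Real.pi_gt_three])
  unfold chebC; split
  · rw [div_le_one hpi]; exact h1
  · rw [div_le_one hpi]; exact h2

lemma chebT_eq (k : ℕ) :
    chebT k = fun t => (Polynomial.C (chebC k) * T ℝ (k:ℤ)).eval t := by
  funext t; simp [chebT, chebC, eval_mul]

lemma iteratedDeriv_chebT (r k : ℕ) (t : ℝ) :
    iteratedDeriv r (chebT k) t
      = chebC k * (Polynomial.derivative^[r] (T ℝ (k:ℤ))).eval t := by
  rw [chebT_eq, iteratedDeriv_polyeval, iterate_derivative_C_mul]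
  simp [eval_mul]

lemma chebT_abs_le (k : ℕ) {t : ℝ} (ht : t ∈ Set.Icc (-1:ℝ) 1) : |chebT k t| ≤ 1 := by
  rw [chebT_eq]
  simp only [eval_mul, eval_C, abs_mul]
  calc |chebC k| * |(T ℝ (k:ℤ)).eval t| ≤ 1 * 1 := by
        apply mul_le_mul _ (T_eval_abs_le _ ht) (abs_nonneg _) zero_le_one
        rw [abs_of_nonneg (chebC_nonneg k)]; exact chebC_le_one k
    _ = 1 := by norm_num

lemma iteratedDeriv_chebT_abs_le (r k : ℕ) {t : ℝ} (ht : t ∈ Set.Icc (-1:ℝ) 1) :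
    |iteratedDeriv r (chebT k) t| ≤ 4 ^ (r+1) * ((k:ℝ)+1) ^ (2*r) := by
  rw [iteratedDeriv_chebT, abs_mul]
  calc |chebC k| * |(Polynomial.derivative^[r] (T ℝ (k:ℤ))).eval t|
      ≤ 1 * (4 ^ (r+1) * ((k:ℝ)+1) ^ (2*r)) := by
        apply mul_le_mul _ (TB r k t ht) (abs_nonneg _) zero_le_one
        rw [abs_of_nonneg (chebC_nonneg k)]; exact chebC_le_one k
    _ = _ := one_mul _

lemma sum_weight_bound (r n : ℕ) (hr : 1 ≤ r) (hn : r ≤ n) (γ : ℝ) (hγ : 1 ≤ γ)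
    (s : ℝ) (hs : 1 ≤ s) :
    ∑ k ∈ Finset.Icc r n,
        ((⌊((n:ℝ)/(k:ℝ)) ^ (1/γ)⌋₊ + 1 : ℕ) : ℝ) * ((((k:ℝ)+1) ^ (2*r)) ^ s)
      ≤ 2 * (2:ℝ) ^ (2*(r:ℝ)*s) * (n:ℝ) ^ (2*(r:ℝ)*s + 1) := by
  have hn1 : (1:ℝ) ≤ (n:ℝ) := by exact_mod_cast le_trans hr hn
  have hnpos : (0:ℝ) < n := by linarith
  have hterm : ∀ k ∈ Finset.Icc r n,
      ((⌊((n:ℝ)/(k:ℝ)) ^ (1/γ)⌋₊ + 1 : ℕ) : ℝ) * ((((k:ℝ)+1) ^ (2*r)) ^ s)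
        ≤ 2 * (2:ℝ) ^ (2*(r:ℝ)*s) * (n:ℝ) ^ (2*(r:ℝ)*s) := by
    intro k hk
    simp only [Finset.mem_Icc] at hk
    have hk1 : (1:ℝ) ≤ (k:ℝ) := by exact_mod_cast le_trans hr hk.1
    have hkpos : (0:ℝ) < (k:ℝ) := by linarith
    have hkn : (k:ℝ) ≤ n := by exact_mod_cast hk.2
    have hdiv1 : (1:ℝ) ≤ (n:ℝ)/(k:ℝ) := (one_le_div hkpos).2 hkn
    have hfe : ((n:ℝ)/(k:ℝ)) ^ (1/γ) ≤ (n:ℝ)/(k:ℝ) := by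
      calc ((n:ℝ)/(k:ℝ)) ^ (1/γ) ≤ ((n:ℝ)/(k:ℝ)) ^ (1:ℝ) := by
            apply Real.rpow_le_rpow_of_exponent_le hdiv1
            rw [div_le_one (by linarith : (0:ℝ) < γ)]; exact hγ
        _ = (n:ℝ)/(k:ℝ) := Real.rpow_one _
    have hcount : ((⌊((n:ℝ)/(k:ℝ)) ^ (1/γ)⌋₊ + 1 : ℕ) : ℝ) ≤ 2 * ((n:ℝ)/(k:ℝ)) := by
      push_cast
      have := (Nat.floor_le (by positivity : (0:ℝ) ≤ ((n:ℝ)/(k:ℝ)) ^ (1/γ)))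
      have h2 : (⌊((n:ℝ)/(k:ℝ)) ^ (1/γ)⌋₊ : ℝ) ≤ (n:ℝ)/(k:ℝ) := le_trans this hfe
      linarith
    have hwt : ((((k:ℝ)+1) ^ (2*r)) ^ s) ≤ (2:ℝ) ^ (2*(r:ℝ)*s) * (k:ℝ) ^ (2*(r:ℝ)*s) := by
      have h1 : (((k:ℝ)+1) ^ (2*r) : ℝ) ≤ (2*(k:ℝ)) ^ (2*r) :=
        pow_le_pow_left₀ (by positivity) (by linarith) (2*r)
      have h2 : ((((k:ℝ)+1) ^ (2*r)) ^ s) ≤ ((2*(k:ℝ)) ^ (2*r)) ^ s :=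
        Real.rpow_le_rpow (by positivity) h1 (by linarith)
      calc ((((k:ℝ)+1) ^ (2*r)) ^ s) ≤ ((2*(k:ℝ)) ^ (2*r)) ^ s := h2
        _ = (2*(k:ℝ)) ^ (((2*r:ℕ):ℝ) * s) := by
            rw [← Real.rpow_natCast (2*(k:ℝ)) (2*r), ← Real.rpow_mul (by positivity)]
        _ = (2:ℝ) ^ (2*(r:ℝ)*s) * (k:ℝ) ^ (2*(r:ℝ)*s) := by
            rw [Real.mul_rpow (by norm_num) (by positivity)]
            push_cast; ring_nf
    calc ((⌊((n:ℝ)/(k:ℝ)) ^ (1/γ)⌋₊ + 1 : ℕ) : ℝ) * ((((k:ℝ)+1) ^ (2*r)) ^ s)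
        ≤ (2 * ((n:ℝ)/(k:ℝ))) * ((2:ℝ) ^ (2*(r:ℝ)*s) * (k:ℝ) ^ (2*(r:ℝ)*s)) := by
          apply mul_le_mul hcount hwt (by positivity) (by positivity)
      _ = 2 * (2:ℝ) ^ (2*(r:ℝ)*s) * ((n:ℝ) * ((k:ℝ) ^ (2*(r:ℝ)*s) / (k:ℝ))) := by ring
      _ ≤ 2 * (2:ℝ) ^ (2*(r:ℝ)*s) * (n:ℝ) ^ (2*(r:ℝ)*s) := by
          have hkk : (k:ℝ) ^ (2*(r:ℝ)*s) / (k:ℝ) = (k:ℝ) ^ (2*(r:ℝ)*s - 1) := by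
            rw [Real.rpow_sub hkpos, Real.rpow_one]
          rw [hkk]
          have hmono : (k:ℝ) ^ (2*(r:ℝ)*s - 1) ≤ (n:ℝ) ^ (2*(r:ℝ)*s - 1) := by
            apply Real.rpow_le_rpow (by positivity) hkn
            have : (1:ℝ) ≤ (r:ℝ) := by exact_mod_cast hr
            nlinarith
          have hsplit : (n:ℝ) * (n:ℝ) ^ (2*(r:ℝ)*s - 1) = (n:ℝ) ^ (2*(r:ℝ)*s) := by
            rw [show 2*(r:ℝ)*s = (2*(r:ℝ)*s - 1) + 1 by ring, Real.rpow_add_one hnpos.ne']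
            ring
          calc 2 * (2:ℝ) ^ (2*(r:ℝ)*s) * ((n:ℝ) * (k:ℝ) ^ (2*(r:ℝ)*s - 1))
              ≤ 2 * (2:ℝ) ^ (2*(r:ℝ)*s) * ((n:ℝ) * (n:ℝ) ^ (2*(r:ℝ)*s - 1)) := by
                have h2p : (0:ℝ) < (2:ℝ) ^ (2*(r:ℝ)*s) := by positivity
                have := mul_le_mul_of_nonneg_left hmono (le_of_lt hnpos)
                nlinarith
            _ = 2 * (2:ℝ) ^ (2*(r:ℝ)*s) * (n:ℝ) ^ (2*(r:ℝ)*s) := by rw [hsplit]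
  calc ∑ k ∈ Finset.Icc r n, ((⌊((n:ℝ)/(k:ℝ)) ^ (1/γ)⌋₊ + 1 : ℕ) : ℝ) * ((((k:ℝ)+1) ^ (2*r)) ^ s)
      ≤ ∑ k ∈ Finset.Icc r n, 2 * (2:ℝ) ^ (2*(r:ℝ)*s) * (n:ℝ) ^ (2*(r:ℝ)*s) :=
        Finset.sum_le_sum hterm
    _ = ((Finset.Icc r n).card : ℝ) * (2 * (2:ℝ) ^ (2*(r:ℝ)*s) * (n:ℝ) ^ (2*(r:ℝ)*s)) := by
        rw [Finset.sum_const, nsmul_eq_mul]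
    _ ≤ (n:ℝ) * (2 * (2:ℝ) ^ (2*(r:ℝ)*s) * (n:ℝ) ^ (2*(r:ℝ)*s)) := by
        apply mul_le_mul_of_nonneg_right _ (by positivity)
        have hcard : (Finset.Icc r n).card = n + 1 - r := Nat.card_Icc r n
        rw [hcard]
        have : n + 1 - r ≤ n := by omega
        exact_mod_cast this
    _ = 2 * (2:ℝ) ^ (2*(r:ℝ)*s) * ((n:ℝ) * (n:ℝ) ^ (2*(r:ℝ)*s)) := by ring
    _ = 2 * (2:ℝ) ^ (2*(r:ℝ)*s) * (n:ℝ) ^ (2*(r:ℝ)*s + 1) := by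
        rw [Real.rpow_add_one hnpos.ne']
        ring

lemma sum_indicator_B (r n : ℕ) (m : ℕ → ℕ) (hm : ∀ k ∈ Finset.Icc r n, m k ≤ n)
    (h : ℕ → ℕ → ℝ) :
    ∑ kj ∈ (Finset.Icc r n) ×ˢ Finset.range (n+1),
      (if kj.1 ∈ Finset.Icc r n ∧ kj.2 < m kj.1 + 1 then h kj.1 kj.2 else 0)
    = ∑ k ∈ Finset.Icc r n, ∑ j ∈ Finset.range (m k + 1), h k j := by
  rw [Finset.sum_product]
  apply Finset.sum_congr rfl
  intro k hk
  have hcong : ∀ j ∈ Finset.range (n+1),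
      (if (k ∈ Finset.Icc r n ∧ j < m k + 1) then h k j else 0)
        = if j < m k + 1 then h k j else 0 := by
    intro j _; simp [hk]
  rw [Finset.sum_congr rfl hcong, ← Finset.sum_filter]
  congr 1
  ext j
  simp only [Finset.mem_filter, Finset.mem_range]
  constructor
  · tauto
  · intro hj
    have := hm k hk
    exact ⟨by omega, hj⟩

end Aux
lemma const_le_aux (r : ℕ) : (4:ℝ)^(r+1) * (2 * (2:ℝ)^(2*(r:ℝ))) ≤ 4^(2*r+4) := by
  have h0 : (2:ℝ)^(2*(r:ℝ)) = 2^(2*r) := by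
    rw [← Real.rpow_natCast 2 (2*r)]; push_cast; ring_nf
  rw [h0, show (4:ℝ) = 2^2 by norm_num, ← pow_mul, ← pow_mul]
  have h : (2:ℝ)^(2*(r+1)) * (2 * 2^(2*r)) = 2^(2*(r+1) + 1 + 2*r) := by
    rw [pow_add, pow_add, pow_one]; ring
  rw [h]
  exact pow_le_pow_right₀ one_le_two (by omega)

/-- Uniform-norm stability of the truncated differentiation operator: if the coefficient
errors are bounded by `δ` in `ℓ_p`, `1 ≤ p ≤ ∞`, then
`‖D^{(r,0)}_{n,γ} f - D^{(r,0)}_{n,γ} f^δ‖_C ≤ c δ n^{2r-1/p+1}` on `Q = [-1,1]²`. -/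
theorem truncDiff_stability_C (r : ℕ) (hr : 1 ≤ r) (p : ℝ≥0∞) (hp : 1 ≤ p)
    (γ : ℝ) (hγ : 1 ≤ γ) :
    ∃ c : ℝ, 0 < c ∧ ∀ (n : ℕ) (δ : ℝ) (f fδ : ℝ → ℝ → ℝ), 0 ≤ δ →
      eLpNorm (fun kj : ℕ × ℕ => chebCoeff f kj.1 kj.2 - chebCoeff fδ kj.1 kj.2)
          p Measure.count ≤ ENNReal.ofReal δ →
      ∀ t ∈ Set.Icc (-1 : ℝ) 1, ∀ τ ∈ Set.Icc (-1 : ℝ) 1,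
        |truncDiff r n γ f t τ - truncDiff r n γ fδ t τ| ≤
          c * δ * (n : ℝ) ^ (2 * (r : ℝ) - p.toReal⁻¹ + 1) := by
  refine ⟨4 ^ (2*r+4), by positivity, ?_⟩
  intro n δ f fδ hδ hN t ht τ hτ
  by_cases hn : r ≤ n
  swap
  · have hicc : Finset.Icc r n = ∅ := Finset.Icc_eq_empty (by omega)
    simp only [truncDiff, hicc, Finset.sum_empty, sub_self, abs_zero]
    positivity
  -- main case
  have hn1 : 1 ≤ n := le_trans hr hn
  have hnR : (1:ℝ) ≤ (n:ℝ) := by exact_mod_cast hn1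
  have hnpos : (0:ℝ) < n := by linarith
  -- the difference as a double sum
  have hdiff : truncDiff r n γ f t τ - truncDiff r n γ fδ t τ
      = ∑ k ∈ Finset.Icc r n, ∑ j ∈ Finset.range (⌊((n : ℝ) / (k : ℝ)) ^ (1 / γ)⌋₊ + 1),
          (chebCoeff f k j - chebCoeff fδ k j) * iteratedDeriv r (chebT k) t * chebT j τ := by
    unfold truncDiff
    rw [← Finset.sum_sub_distrib]
    refine Finset.sum_congr rfl fun k _ => ?_
    rw [← Finset.sum_sub_distrib]
    refine Finset.sum_congr rfl fun j _ => ?_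
    ring
  set m : ℕ → ℕ := fun k => ⌊((n : ℝ) / (k : ℝ)) ^ (1 / γ)⌋₊ with hm
  set Δ : ℕ × ℕ → ℝ := fun kj : ℕ × ℕ => chebCoeff f kj.1 kj.2 - chebCoeff fδ kj.1 kj.2 with hΔ
  set B : Finset (ℕ × ℕ) := (Finset.Icc r n) ×ˢ Finset.range (n+1) with hB
  set G : ℕ × ℕ → ℝ :=
    (fun kj => if kj.1 ∈ Finset.Icc r n ∧ kj.2 < m kj.1 + 1 then ((kj.1:ℝ)+1) ^ (2*r) else 0) with hG
  have hGnn : ∀ kj, 0 ≤ G kj := by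
    intro kj; rw [hG]
    dsimp only
    split
    · positivity
    · exact le_rfl
  have hmbound : ∀ k ∈ Finset.Icc r n, m k ≤ n := by
    intro k hk
    simp only [Finset.mem_Icc] at hk
    have hk1 : (1:ℝ) ≤ (k:ℝ) := by exact_mod_cast le_trans hr hk.1
    have hkpos : (0:ℝ) < (k:ℝ) := by linarith
    have hkn : (k:ℝ) ≤ n := by exact_mod_cast hk.2
    have hdiv1 : (1:ℝ) ≤ (n:ℝ)/(k:ℝ) := (one_le_div hkpos).2 hkn
    have hfe : ((n:ℝ)/(k:ℝ)) ^ (1/γ) ≤ (n:ℝ)/(k:ℝ) := by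
      calc ((n:ℝ)/(k:ℝ)) ^ (1/γ) ≤ ((n:ℝ)/(k:ℝ)) ^ (1:ℝ) := by
            apply Real.rpow_le_rpow_of_exponent_le hdiv1
            rw [div_le_one (by linarith : (0:ℝ) < γ)]; exact hγ
        _ = (n:ℝ)/(k:ℝ) := Real.rpow_one _
    have hdn : (n:ℝ)/(k:ℝ) ≤ n := by
      rw [div_le_iff₀ hkpos]; nlinarith
    have : (m k : ℝ) ≤ (n:ℝ) := by
      rw [hm]
      exact le_trans (Nat.floor_le (by positivity)) (le_trans hfe hdn)
    exact_mod_cast this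
  have hGzero : ∀ kj : ℕ × ℕ, kj ∉ B → G kj = 0 := by
    intro kj hkj
    rw [hG]
    dsimp only
    rw [if_neg]
    intro hc
    apply hkj
    rw [hB, Finset.mem_product, Finset.mem_range]
    exact ⟨hc.1, by have := hmbound kj.1 hc.1; omega⟩
  set S : ℝ := ∑ kj ∈ B, |Δ kj| * G kj with hS
  -- step 1 : pointwise bound by the weighted coefficient sum
  have h1 : |truncDiff r n γ f t τ - truncDiff r n γ fδ t τ| ≤ 4 ^ (r+1) * S := by
    rw [hdiff]
    have hSeq : S = ∑ k ∈ Finset.Icc r n, ∑ j ∈ Finset.range (m k + 1),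
        |Δ (k, j)| * ((k:ℝ)+1) ^ (2*r) := by
      rw [hS, ← sum_indicator_B r n m hmbound (fun k j => |Δ (k, j)| * ((k:ℝ)+1) ^ (2*r))]
      refine Finset.sum_congr rfl fun kj _ => ?_
      rw [hG]
      dsimp only
      by_cases hc : kj.1 ∈ Finset.Icc r n ∧ kj.2 < m kj.1 + 1
      · rw [if_pos hc, if_pos hc]
      · rw [if_neg hc, if_neg hc, mul_zero]
    calc |∑ k ∈ Finset.Icc r n, ∑ j ∈ Finset.range (m k + 1),
            Δ (k, j) * iteratedDeriv r (chebT k) t * chebT j τ|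
        ≤ ∑ k ∈ Finset.Icc r n, ∑ j ∈ Finset.range (m k + 1),
            |Δ (k, j)| * (4 ^ (r+1) * ((k:ℝ)+1) ^ (2*r)) := by
          refine (Finset.abs_sum_le_sum_abs _ _).trans (Finset.sum_le_sum fun k _ => ?_)
          refine (Finset.abs_sum_le_sum_abs _ _).trans (Finset.sum_le_sum fun j _ => ?_)
          rw [abs_mul, abs_mul]
          have hD := iteratedDeriv_chebT_abs_le r k ht
          have hTτ := chebT_abs_le j hτ
          calc |Δ (k, j)| * |iteratedDeriv r (chebT k) t| * |chebT j τ|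
              ≤ |Δ (k, j)| * (4 ^ (r+1) * ((k:ℝ)+1) ^ (2*r)) * 1 := by
                apply mul_le_mul _ hTτ (abs_nonneg _) (by positivity)
                exact mul_le_mul_of_nonneg_left hD (abs_nonneg _)
            _ = |Δ (k, j)| * (4 ^ (r+1) * ((k:ℝ)+1) ^ (2*r)) := mul_one _
      _ = 4 ^ (r+1) * S := by
          rw [hSeq, Finset.mul_sum]
          refine Finset.sum_congr rfl fun k _ => ?_
          rw [Finset.mul_sum]
          refine Finset.sum_congr rfl fun j _ => ?_
          ring
  -- step 2 : bound for sums of powers of the weights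
  have hGsum : ∀ s : ℝ, 1 ≤ s →
      ∑ kj ∈ B, (G kj) ^ s ≤ 2 * (2:ℝ) ^ (2*(r:ℝ)*s) * (n:ℝ) ^ (2*(r:ℝ)*s + 1) := by
    intro s hs
    have hsne : s ≠ 0 := by linarith
    have h2 : ∑ kj ∈ B, (G kj) ^ s
        = ∑ k ∈ Finset.Icc r n, ∑ j ∈ Finset.range (m k + 1), (((k:ℝ)+1) ^ (2*r)) ^ s := by
      rw [← sum_indicator_B r n m hmbound (fun k j => (((k:ℝ)+1) ^ (2*r)) ^ s)]
      refine Finset.sum_congr rfl fun kj _ => ?_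
      rw [hG]
      dsimp only
      by_cases hc : kj.1 ∈ Finset.Icc r n ∧ kj.2 < m kj.1 + 1
      · rw [if_pos hc, if_pos hc]
      · rw [if_neg hc, if_neg hc, Real.zero_rpow hsne]
    rw [h2]
    have h3 : ∀ k ∈ Finset.Icc r n,
        ∑ j ∈ Finset.range (m k + 1), (((k:ℝ)+1) ^ (2*r)) ^ s
          = ((m k + 1 : ℕ) : ℝ) * (((k:ℝ)+1) ^ (2*r)) ^ s := by
      intro k _
      rw [Finset.sum_const, Finset.card_range, nsmul_eq_mul]
    rw [Finset.sum_congr rfl h3]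
    exact sum_weight_bound r n hr hn γ hγ s hs
  -- translation to ENNReal
  have hSof : ENNReal.ofReal S = ∑ kj ∈ B, (‖Δ kj‖₊ : ℝ≥0∞) * ENNReal.ofReal (G kj) := by
    rw [hS, ENNReal.ofReal_sum_of_nonneg (fun kj _ => mul_nonneg (abs_nonneg _) (hGnn kj))]
    refine Finset.sum_congr rfl fun kj _ => ?_
    rw [ENNReal.ofReal_mul (abs_nonneg _), ← enorm_eq_nnnorm, Real.enorm_eq_ofReal_abs]
  set e : ℝ := 2 * (r : ℝ) - p.toReal⁻¹ + 1 with he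
  -- in each case we show  S ≤ δ * (2 * 2^(2r) * n^e)
  have hmain : S ≤ δ * (2 * (2:ℝ) ^ (2*(r:ℝ)) * (n:ℝ) ^ e) := by
    by_cases hptop : p = ∞
    · -- p = ∞
      have hetop : e = 2*(r:ℝ)*1 + 1 := by rw [he, hptop]; norm_num
      have hpt : ∀ kj, |Δ kj| ≤ δ := by
        intro kj
        have h2 : eLpNorm Δ ∞ Measure.count = ⨆ x, ((‖Δ x‖₊ : ℝ≥0∞)) := by
          rw [eLpNorm_exponent_top]
          exact essSup_count _
        rw [hptop, h2] at hN
        have h3 : ((‖Δ kj‖₊ : ℝ≥0∞)) ≤ ENNReal.ofReal δ :=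
          le_trans (le_iSup (fun x => ((‖Δ x‖₊ : ℝ≥0∞))) kj) hN
        rw [← enorm_eq_nnnorm, Real.enorm_eq_ofReal_abs] at h3
        exact (ENNReal.ofReal_le_ofReal_iff hδ).1 h3
      calc S ≤ ∑ kj ∈ B, δ * G kj := by
            refine Finset.sum_le_sum fun kj _ => ?_
            exact mul_le_mul_of_nonneg_right (hpt kj) (hGnn kj)
        _ = δ * ∑ kj ∈ B, G kj := by rw [Finset.mul_sum]
        _ ≤ δ * (2 * (2:ℝ) ^ (2*(r:ℝ)) * (n:ℝ) ^ e) := by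
            apply mul_le_mul_of_nonneg_left _ hδ
            have := hGsum 1 le_rfl
            rw [show ∑ kj ∈ B, (G kj) ^ (1:ℝ) = ∑ kj ∈ B, G kj from
              Finset.sum_congr rfl fun kj _ => Real.rpow_one _] at this
            rw [hetop]
            calc ∑ kj ∈ B, G kj ≤ 2 * (2:ℝ) ^ (2*(r:ℝ)*1) * (n:ℝ) ^ (2*(r:ℝ)*1 + 1) := this
              _ = 2 * (2:ℝ) ^ (2*(r:ℝ)) * (n:ℝ) ^ (2*(r:ℝ)*1 + 1) := by norm_num
    · by_cases hp1 : p = 1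
      · -- p = 1
        have hee : e = 2*(r:ℝ) := by rw [he, hp1]; norm_num
        have hsum1 : ∑ kj ∈ B, |Δ kj| ≤ δ := by
          have h2 : eLpNorm Δ 1 Measure.count = ∑' kj : ℕ × ℕ, ((‖Δ kj‖₊ : ℝ≥0∞)) := by
            rw [eLpNorm_one_eq_lintegral_enorm, lintegral_count]; rfl
          rw [hp1, h2] at hN
          have h3 : ∑ kj ∈ B, ((‖Δ kj‖₊ : ℝ≥0∞)) ≤ ENNReal.ofReal δ :=
            le_trans (ENNReal.sum_le_tsum B) hN
          have h4 : ENNReal.ofReal (∑ kj ∈ B, |Δ kj|) = ∑ kj ∈ B, ((‖Δ kj‖₊ : ℝ≥0∞)) := by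
            rw [ENNReal.ofReal_sum_of_nonneg (fun kj _ => abs_nonneg _)]
            exact Finset.sum_congr rfl fun kj _ => (Real.enorm_eq_ofReal_abs _).symm
          rw [← h4] at h3
          exact (ENNReal.ofReal_le_ofReal_iff hδ).1 h3
        have hGle : ∀ kj : ℕ × ℕ, G kj ≤ ((n:ℝ)+1) ^ (2*r) := by
          intro kj
          rw [hG]
          dsimp only
          split
          · rename_i hc
            have : kj.1 ≤ n := (Finset.mem_Icc.1 hc.1).2
            exact pow_le_pow_left₀ (by positivity) (by exact_mod_cast by linarith [this] : (kj.1:ℝ)+1 ≤ (n:ℝ)+1) (2*r)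
          · positivity
        calc S ≤ ∑ kj ∈ B, |Δ kj| * ((n:ℝ)+1) ^ (2*r) := by
              exact Finset.sum_le_sum fun kj _ =>
                mul_le_mul_of_nonneg_left (hGle kj) (abs_nonneg _)
          _ = (∑ kj ∈ B, |Δ kj|) * ((n:ℝ)+1) ^ (2*r) := by rw [← Finset.sum_mul]
          _ ≤ δ * ((n:ℝ)+1) ^ (2*r) := by
              exact mul_le_mul_of_nonneg_right hsum1 (by positivity)
          _ ≤ δ * (2 * (2:ℝ) ^ (2*(r:ℝ)) * (n:ℝ) ^ e) := by
              apply mul_le_mul_of_nonneg_left _ hδ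
              have hh : ((n:ℝ)+1) ^ (2*r) ≤ (2*(n:ℝ)) ^ (2*r) :=
                pow_le_pow_left₀ (by positivity) (by linarith) (2*r)
              have hsplit : ((2:ℝ)*(n:ℝ)) ^ (2*r) = 2^(2*r) * (n:ℝ)^(2*r) := mul_pow 2 _ (2*r)
              have hcv1 : (2:ℝ) ^ (2*(r:ℝ)) = 2^(2*r) := by
                rw [← Real.rpow_natCast 2 (2*r)]; push_cast; ring_nf
              have hcv2 : (n:ℝ) ^ e = (n:ℝ)^(2*r) := by
                rw [hee, ← Real.rpow_natCast (n:ℝ) (2*r)]; push_cast; ring_nf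
              rw [hcv1, hcv2]
              nlinarith [pow_nonneg (le_of_lt hnpos) (2*r), pow_pos (show (0:ℝ) < 2 by norm_num) (2*r)]
      · -- 1 < p < ∞
        have hplt : 1 < p := lt_of_le_of_ne hp (Ne.symm hp1)
        have hp0 : p ≠ 0 := (zero_lt_one.trans_le hp).ne'
        have hp'1 : 1 < p.toReal := by
          have := (ENNReal.toReal_lt_toReal ENNReal.one_ne_top hptop).2 hplt
          simpa using this
        set p' : ℝ := p.toReal with hp'
        set q' : ℝ := p' / (p' - 1) with hq'
        have hpq : p'.HolderConjugate q' := Real.HolderConjugate.conjExponent hp'1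
        have hq1 : 1 < q' := hpq.symm.lt
        have hq0 : (0:ℝ) < q' := by linarith
        have hGmeas : AEMeasurable (fun kj : ℕ × ℕ => ENNReal.ofReal (G kj)) Measure.count :=
          (measurable_of_countable _).aemeasurable
        have hFmeas : AEMeasurable (fun kj : ℕ × ℕ => ((‖Δ kj‖₊ : ℝ≥0∞))) Measure.count :=
          (measurable_of_countable _).aemeasurable
        have hH := ENNReal.lintegral_mul_le_Lp_mul_Lq Measure.count hpq hFmeas hGmeas
        -- identify the first factor with the eLpNorm
        have hA : (∫⁻ a : ℕ × ℕ, ((‖Δ a‖₊ : ℝ≥0∞)) ^ p' ∂Measure.count) ^ (1/p')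
            = eLpNorm Δ p Measure.count := by
          rw [eLpNorm_eq_lintegral_rpow_enorm_toReal hp0 hptop]; rfl
        -- bound the second factor
        have hBq : (∫⁻ a, ENNReal.ofReal (G a) ^ q' ∂Measure.count)
            ≤ ENNReal.ofReal (2 * (2:ℝ) ^ (2*(r:ℝ)*q') * (n:ℝ) ^ (2*(r:ℝ)*q' + 1)) := by
          rw [lintegral_count]
          have hptw : (fun kj : ℕ × ℕ => ENNReal.ofReal (G kj) ^ q')
              = fun kj => ENNReal.ofReal ((G kj) ^ q') := by
            funext kj
            rw [ENNReal.ofReal_rpow_of_nonneg (hGnn kj) hq0.le]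
          rw [hptw]
          have hts : ∑' kj : ℕ × ℕ, ENNReal.ofReal ((G kj) ^ q')
              = ∑ kj ∈ B, ENNReal.ofReal ((G kj) ^ q') := by
            apply tsum_eq_sum
            intro kj hkj
            rw [hGzero kj hkj, Real.zero_rpow (by linarith : q' ≠ 0), ENNReal.ofReal_zero]
          rw [hts, ← ENNReal.ofReal_sum_of_nonneg
            (fun kj _ => Real.rpow_nonneg (hGnn kj) q')]
          exact ENNReal.ofReal_le_ofReal (hGsum q' hq1.le)
        have hBq' : (∫⁻ a, ENNReal.ofReal (G a) ^ q' ∂Measure.count) ^ (1/q')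
            ≤ ENNReal.ofReal (2 * (2:ℝ) ^ (2*(r:ℝ)) * (n:ℝ) ^ (2*(r:ℝ) + 1/q')) := by
          calc (∫⁻ a, ENNReal.ofReal (G a) ^ q' ∂Measure.count) ^ (1/q')
              ≤ (ENNReal.ofReal (2 * (2:ℝ) ^ (2*(r:ℝ)*q') * (n:ℝ) ^ (2*(r:ℝ)*q' + 1))) ^ (1/q') :=
                ENNReal.rpow_le_rpow hBq (by positivity)
            _ = ENNReal.ofReal ((2 * (2:ℝ) ^ (2*(r:ℝ)*q') * (n:ℝ) ^ (2*(r:ℝ)*q' + 1)) ^ (1/q')) := by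
                rw [ENNReal.ofReal_rpow_of_nonneg (by positivity) (by positivity)]
            _ ≤ ENNReal.ofReal (2 * (2:ℝ) ^ (2*(r:ℝ)) * (n:ℝ) ^ (2*(r:ℝ) + 1/q')) := by
                apply ENNReal.ofReal_le_ofReal
                have hqne : q' ≠ 0 := hq0.ne'
                have h2a : ((2:ℝ)) ^ (1/q') ≤ 2 := by
                  calc (2:ℝ) ^ (1/q') ≤ (2:ℝ) ^ (1:ℝ) :=
                        Real.rpow_le_rpow_of_exponent_le (by norm_num)
                          (by rw [div_le_one hq0]; linarith)
                    _ = 2 := Real.rpow_one 2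
                have h2b : ((2:ℝ) ^ (2*(r:ℝ)*q')) ^ (1/q') = (2:ℝ) ^ (2*(r:ℝ)) := by
                  rw [← Real.rpow_mul (by norm_num : (0:ℝ) ≤ 2)]
                  congr 1
                  field_simp
                have h2c : ((n:ℝ) ^ (2*(r:ℝ)*q' + 1)) ^ (1/q') = (n:ℝ) ^ (2*(r:ℝ) + 1/q') := by
                  rw [← Real.rpow_mul (le_of_lt hnpos)]
                  congr 1
                  field_simp
                calc (2 * (2:ℝ)^(2*(r:ℝ)*q') * (n:ℝ)^(2*(r:ℝ)*q'+1)) ^ (1/q')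
                    = (2:ℝ)^(1/q') * ((2:ℝ)^(2*(r:ℝ)*q'))^(1/q')
                        * ((n:ℝ)^(2*(r:ℝ)*q'+1))^(1/q') := by
                      rw [Real.mul_rpow (by positivity) (by positivity),
                        Real.mul_rpow (by norm_num) (by positivity)]
                  _ = (2:ℝ)^(1/q') * (2:ℝ)^(2*(r:ℝ)) * (n:ℝ)^(2*(r:ℝ)+1/q') := by
                      rw [h2b, h2c]
                  _ ≤ 2 * (2:ℝ)^(2*(r:ℝ)) * (n:ℝ)^(2*(r:ℝ)+1/q') := by
                      have hx : (0:ℝ) ≤ (2:ℝ)^(2*(r:ℝ)) := by positivity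
                      have hy : (0:ℝ) ≤ (n:ℝ)^(2*(r:ℝ)+1/q') := by positivity
                      have := mul_le_mul_of_nonneg_right
                        (mul_le_mul_of_nonneg_right h2a hx) hy
                      linarith
        have hchain : ENNReal.ofReal S ≤ ENNReal.ofReal δ
            * ENNReal.ofReal (2 * (2:ℝ)^(2*(r:ℝ)) * (n:ℝ)^(2*(r:ℝ)+1/q')) := by
          rw [hSof]
          calc ∑ kj ∈ B, (‖Δ kj‖₊ : ℝ≥0∞) * ENNReal.ofReal (G kj)
              ≤ ∑' kj : ℕ × ℕ, (‖Δ kj‖₊ : ℝ≥0∞) * ENNReal.ofReal (G kj) :=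
                ENNReal.sum_le_tsum B
            _ = ∫⁻ kj, ((fun kj : ℕ × ℕ => ((‖Δ kj‖₊ : ℝ≥0∞)))
                  * fun kj => ENNReal.ofReal (G kj)) kj ∂Measure.count := by
                rw [lintegral_count]; rfl
            _ ≤ (∫⁻ a : ℕ × ℕ, ((‖Δ a‖₊ : ℝ≥0∞)) ^ p' ∂Measure.count) ^ (1/p')
                * (∫⁻ a, ENNReal.ofReal (G a) ^ q' ∂Measure.count) ^ (1/q') := hH
            _ ≤ ENNReal.ofReal δ
                * ENNReal.ofReal (2 * (2:ℝ)^(2*(r:ℝ)) * (n:ℝ)^(2*(r:ℝ)+1/q')) := by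
                apply mul_le_mul' _ hBq'
                rw [hA]; exact hN
        have he' : e = 2*(r:ℝ) + 1/q' := by
          have h1s := hpq.one_sub_inv
          rw [he, one_div]
          linarith
        have h0 : (0:ℝ) ≤ δ * (2 * (2:ℝ)^(2*(r:ℝ)) * (n:ℝ)^(2*(r:ℝ)+1/q')) := by positivity
        have hfin : S ≤ δ * (2 * (2:ℝ)^(2*(r:ℝ)) * (n:ℝ)^(2*(r:ℝ)+1/q')) := by
          refine (ENNReal.ofReal_le_ofReal_iff (by positivity)).1 ?_
          rw [ENNReal.ofReal_mul hδ]
          exact hchain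
        rw [he']
        exact hfin
  -- conclusion
  calc |truncDiff r n γ f t τ - truncDiff r n γ fδ t τ|
      ≤ 4 ^ (r+1) * S := h1
    _ ≤ 4 ^ (r+1) * (δ * (2 * (2:ℝ) ^ (2*(r:ℝ)) * (n:ℝ) ^ e)) := by
        exact mul_le_mul_of_nonneg_left hmain (by positivity)
    _ = (4 ^ (r+1) * (2 * (2:ℝ) ^ (2*(r:ℝ)))) * δ * (n:ℝ) ^ e := by ring
    _ ≤ 4 ^ (2*r+4) * δ * (n:ℝ) ^ e := by
        have hC := const_le_aux r
        have ha : (0:ℝ) ≤ (n:ℝ) ^ e := Real.rpow_nonneg (le_of_lt hnpos) e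
        have := mul_le_mul_of_nonneg_right (mul_le_mul_of_nonneg_right hC hδ) ha
        linarith
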